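/- Let A ∈ ℝ^{n×n}, B_u ∈ ℝ^{n×m}, B_d ∈ ℝ^{n×q}, symmetric Q ∈ ℝ^{n×n}, S ∈ ℝ^{n×m}, symmetric R ∈ ℝ^{m×m}, and let X be a symmetric matrix with H := R + B_uᵀXB_u invertible satisfying the DARE 0 = X − AᵀXA − Q + (AᵀXB_u + S)H⁻¹(AᵀXB_u + S)ᵀ. Define K_x := H⁻¹(AᵀXB_u + S)ᵀ, K_v := H⁻¹B_uᵀ, K_d := H⁻¹B_uᵀXB_d. Let x : ℤ → ℝⁿ, u : ℤ → ℝᵐ, d : ℤ → ℝ^q, v : ℤ → ℝⁿ be square-summable sequences (i.e. the sums over t ∈ ℤ of ‖x_t‖², ‖u_t‖², ‖d_t‖², ‖v_t‖² are finite) satisfying x_{t+1} = Ax_t + B_uu_t + B_dd_t and v_t = (A − B_uK_x)ᵀ(v_{t+1} + XB_dd_t) for all t ∈ ℤ. Set u°_t := −K_xx_t − K_vv_{t+1} − K_dd_t. Then the families t ↦ x_tᵀQx_t + 2x_tᵀSu_t + u_tᵀRu_t and t ↦ (u_t − u°_t)ᵀH(u_t − u°_t) − (K_dd_t + K_vv_{t+1})ᵀH(K_dd_t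 + K_vv_{t+1}) + d_tᵀB_dᵀXB_dd_t + 2v_{t+1}ᵀB_dd_t are summable over ℤ with equal sums. -/

import Mathlib

/-!
At a single time step, completing the square in `u` with the Riccati equation writes the stage
cost as the completed square, minus the feedforward correction, plus disturbance terms and the
difference `φ t - φ (t + 1)` of the storage function `φ t = x tᵀ X x t + 2 v tᵀ x t`; the
backward recursion for `v` is exactly what cancels the cross terms between `v` and the state.
Square summability makes `φ` summable, so these differences telescope to zero over `ℤ`.
-/

open Matrix

section Quadratic

variable {ι κ α : Type*} [Fintype ι] [CommRing α]

theorem Matrix.IsSymm.dotProduct_mulVec_comm {M : Matrix ι ι α} (hM : M.IsSymm) (x y : ι → α) :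
    x ⬝ᵥ M *ᵥ y = y ⬝ᵥ M *ᵥ x := by
  rw [← dotProduct_transpose_mulVec, hM.eq]

theorem Matrix.IsSymm.add_dotProduct_mulVec_add {M : Matrix ι ι α} (hM : M.IsSymm)
    (x y : ι → α) :
    (x + y) ⬝ᵥ M *ᵥ (x + y) = x ⬝ᵥ M *ᵥ x + 2 * (x ⬝ᵥ M *ᵥ y) + y ⬝ᵥ M *ᵥ y := by
  rw [mulVec_add, add_dotProduct, dotProduct_add, dotProduct_add, hM.dotProduct_mulVec_comm y x]
  ring

theorem Matrix.dotProduct_transpose_mulVec_eq_mulVec_dotProduct [Fintype κ] (M : Matrix ι κ α)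
    (x : κ → α) (y : ι → α) :
    x ⬝ᵥ Mᵀ *ᵥ y = (M *ᵥ x) ⬝ᵥ y := by
  rw [dotProduct_transpose_mulVec, dotProduct_comm]

theorem Matrix.IsSymm.transpose_mul_mul {X : Matrix ι ι α} (hX : X.IsSymm) (B : Matrix ι κ α) :
    (Bᵀ * X * B).IsSymm := by
  simp [IsSymm, transpose_mul, hX.eq, Matrix.mul_assoc]

end Quadratic

section LQR

variable {ι κ ν α : Type*} [Fintype ι] [Fintype κ] [Fintype ν] [CommRing α]
  {A X Q : Matrix ι ι α} {B S : Matrix ι κ α} {R H : Matrix κ κ α} {K : Matrix κ ι α}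

theorem lqr_completion_of_squares (hR : R.IsSymm) (hX : X.IsSymm)
    (hH : H = R + Bᵀ * X * B) (hHK : H * K = (Aᵀ * X * B + S)ᵀ)
    (hGK : (Aᵀ * X * B + S) * K = Aᵀ * X * A + Q - X) (a : ι → α) (b : κ → α) :
    a ⬝ᵥ Q *ᵥ a + 2 * (a ⬝ᵥ S *ᵥ b) + b ⬝ᵥ R *ᵥ b
        + (A *ᵥ a + B *ᵥ b) ⬝ᵥ X *ᵥ (A *ᵥ a + B *ᵥ b) - a ⬝ᵥ X *ᵥ a
      = (b + K *ᵥ a) ⬝ᵥ H *ᵥ (b + K *ᵥ a) := by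
  have hHs : H.IsSymm := hH ▸ hR.add (hX.transpose_mul_mul B)
  have hbb : b ⬝ᵥ H *ᵥ b = b ⬝ᵥ R *ᵥ b + (B *ᵥ b) ⬝ᵥ X *ᵥ (B *ᵥ b) := by
    rw [hH, add_mulVec, dotProduct_add, ← mulVec_mulVec, ← mulVec_mulVec,
      dotProduct_transpose_mulVec_eq_mulVec_dotProduct]
  have hbK : b ⬝ᵥ H *ᵥ (K *ᵥ a) = (A *ᵥ a) ⬝ᵥ X *ᵥ (B *ᵥ b) + a ⬝ᵥ S *ᵥ b := by
    rw [mulVec_mulVec, hHK, dotProduct_transpose_mulVec, add_mulVec, dotProduct_add,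
      ← mulVec_mulVec, ← mulVec_mulVec, dotProduct_transpose_mulVec_eq_mulVec_dotProduct]
  have hKK : (K *ᵥ a) ⬝ᵥ H *ᵥ (K *ᵥ a)
      = (A *ᵥ a) ⬝ᵥ X *ᵥ (A *ᵥ a) + a ⬝ᵥ Q *ᵥ a - a ⬝ᵥ X *ᵥ a := by
    rw [mulVec_mulVec, hHK, dotProduct_transpose_mulVec, mulVec_mulVec, hGK, sub_mulVec,
      add_mulVec, dotProduct_sub, dotProduct_add, ← mulVec_mulVec, ← mulVec_mulVec,
      dotProduct_transpose_mulVec_eq_mulVec_dotProduct]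
  rw [hHs.add_dotProduct_mulVec_add, hX.add_dotProduct_mulVec_add, hbb, hbK, hKK]
  ring

variable {Bd : Matrix ι ν α} {Kv : Matrix κ ι α} {Kd : Matrix κ ν α}

/-- With `w = v (t + 1)`, the vector `(A - B * K)ᵀ *ᵥ (w + X *ᵥ (Bd *ᵥ c))` is `v t`, so the
last bracket is `φ t - φ (t + 1)`. -/
theorem stage_cost_eq_completed_square_add_storage_sub (hR : R.IsSymm) (hX : X.IsSymm)
    (hH : H = R + Bᵀ * X * B) (hHK : H * K = (Aᵀ * X * B + S)ᵀ)
    (hGK : (Aᵀ * X * B + S) * K = Aᵀ * X * A + Q - X) (hHKv : H * Kv = Bᵀ)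
    (hHKd : H * Kd = Bᵀ * X * Bd) (a : ι → α) (b : κ → α) (c : ν → α) (w : ι → α) :
    a ⬝ᵥ Q *ᵥ a + 2 * (a ⬝ᵥ S *ᵥ b) + b ⬝ᵥ R *ᵥ b
      = (b + (K *ᵥ a + Kv *ᵥ w + Kd *ᵥ c)) ⬝ᵥ H *ᵥ (b + (K *ᵥ a + Kv *ᵥ w + Kd *ᵥ c))
        - (Kd *ᵥ c + Kv *ᵥ w) ⬝ᵥ H *ᵥ (Kd *ᵥ c + Kv *ᵥ w)
        + c ⬝ᵥ (Bdᵀ * X * Bd) *ᵥ c + 2 * (w ⬝ᵥ Bd *ᵥ c)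
        + ((a ⬝ᵥ X *ᵥ a + 2 * ((A - B * K)ᵀ *ᵥ (w + X *ᵥ (Bd *ᵥ c)) ⬝ᵥ a))
          - ((A *ᵥ a + B *ᵥ b + Bd *ᵥ c) ⬝ᵥ X *ᵥ (A *ᵥ a + B *ᵥ b + Bd *ᵥ c)
            + 2 * (w ⬝ᵥ (A *ᵥ a + B *ᵥ b + Bd *ᵥ c)))) := by
  set p := w + X *ᵥ (Bd *ᵥ c) with hp
  have hHs : H.IsSymm := hH ▸ hR.add (hX.transpose_mul_mul B)
  have hHe : H *ᵥ (Kd *ᵥ c + Kv *ᵥ w) = Bᵀ *ᵥ p := by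
    rw [mulVec_add, mulVec_mulVec, mulVec_mulVec, hHKd, hHKv, add_comm, mulVec_add,
      ← mulVec_mulVec, ← mulVec_mulVec]
  have hfeedforward (y : κ → α) : (y + (Kd *ᵥ c + Kv *ᵥ w)) ⬝ᵥ H *ᵥ (y + (Kd *ᵥ c + Kv *ᵥ w))
      - (Kd *ᵥ c + Kv *ᵥ w) ⬝ᵥ H *ᵥ (Kd *ᵥ c + Kv *ᵥ w)
      = y ⬝ᵥ H *ᵥ y + 2 * (p ⬝ᵥ B *ᵥ y) := by
    rw [hHs.add_dotProduct_mulVec_add, hHe, dotProduct_transpose_mulVec]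
    ring
  have hnext : (A *ᵥ a + B *ᵥ b + Bd *ᵥ c) ⬝ᵥ X *ᵥ (A *ᵥ a + B *ᵥ b + Bd *ᵥ c)
        + 2 * (w ⬝ᵥ (A *ᵥ a + B *ᵥ b + Bd *ᵥ c))
      = (A *ᵥ a + B *ᵥ b) ⬝ᵥ X *ᵥ (A *ᵥ a + B *ᵥ b) + 2 * (p ⬝ᵥ (A *ᵥ a + B *ᵥ b))
        + (Bd *ᵥ c) ⬝ᵥ X *ᵥ (Bd *ᵥ c) + 2 * (w ⬝ᵥ Bd *ᵥ c) := by
    rw [hX.add_dotProduct_mulVec_add, dotProduct_add w, hp, add_dotProduct w,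
      dotProduct_comm (X *ᵥ _) (A *ᵥ a + B *ᵥ b)]
    ring
  have hcostate : (A - B * K)ᵀ *ᵥ p ⬝ᵥ a = p ⬝ᵥ A *ᵥ a - p ⬝ᵥ B *ᵥ (K *ᵥ a) := by
    rw [dotProduct_comm, dotProduct_transpose_mulVec, sub_mulVec, dotProduct_sub,
      mulVec_mulVec]
  have hdist : c ⬝ᵥ (Bdᵀ * X * Bd) *ᵥ c = (Bd *ᵥ c) ⬝ᵥ X *ᵥ (Bd *ᵥ c) := by
    rw [← mulVec_mulVec, ← mulVec_mulVec, dotProduct_transpose_mulVec_eq_mulVec_dotProduct]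
  rw [show b + (K *ᵥ a + Kv *ᵥ w + Kd *ᵥ c) = b + K *ᵥ a + (Kd *ᵥ c + Kv *ᵥ w) by abel,
    add_sub_assoc, hfeedforward, ← lqr_completion_of_squares hR hX hH hHK hGK, hnext,
    hcostate, hdist, mulVec_add B, dotProduct_add p, dotProduct_add p]
  ring

end LQR

section SquareSummable

variable {τ ι κ : Type*} [Fintype ι] [Fintype κ]

theorem Summable.mul_of_summable_mul_self {f g : τ → ℝ} (hf : Summable fun t => f t * f t)
    (hg : Summable fun t => g t * g t) : Summable fun t => f t * g t := by
  refine Summable.of_norm_bounded (hf.add hg) fun t => ?_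
  rw [Real.norm_eq_abs, abs_mul]
  nlinarith [two_mul_le_add_sq |f t| |g t|, abs_mul_abs_self (f t), abs_mul_abs_self (g t),
    abs_nonneg (f t), abs_nonneg (g t)]

theorem Summable.apply_mul_self {f : τ → ι → ℝ} (hf : Summable fun t => f t ⬝ᵥ f t) (i : ι) :
    Summable fun t => f t i * f t i :=
  hf.of_nonneg_of_le (fun _ => mul_self_nonneg _) fun t =>
    Finset.single_le_sum (f := fun j => f t j * f t j) (fun _ _ => mul_self_nonneg _)
      (Finset.mem_univ i)

theorem Summable.dotProduct {f g : τ → ι → ℝ} (hf : Summable fun t => f t ⬝ᵥ f t)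
    (hg : Summable fun t => g t ⬝ᵥ g t) : Summable fun t => f t ⬝ᵥ g t :=
  summable_sum fun i _ => (hf.apply_mul_self i).mul_of_summable_mul_self (hg.apply_mul_self i)

theorem Summable.dotProduct_mulVec {f : τ → ι → ℝ} {g : τ → κ → ℝ}
    (hf : Summable fun t => f t ⬝ᵥ f t) (hg : Summable fun t => g t ⬝ᵥ g t)
    (M : Matrix ι κ ℝ) : Summable fun t => f t ⬝ᵥ M *ᵥ g t := by
  simp only [_root_.dotProduct, mulVec, Finset.mul_sum]
  exact summable_sum fun i _ => summable_sum fun j _ =>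
    (((hf.apply_mul_self i).mul_of_summable_mul_self (hg.apply_mul_self j)).mul_left (M i j)).congr
      fun t => by ring

end SquareSummable

theorem Summable.summable_and_tsum_eq_of_eq_add_sub_add_one {G : Type*} [AddCommGroup G]
    [TopologicalSpace G] [IsTopologicalAddGroup G] [T2Space G] {f g φ : ℤ → G}
    (hf : Summable f) (hφ : Summable φ) (h : ∀ t, f t = g t + (φ t - φ (t + 1))) :
    Summable g ∧ ∑' t, f t = ∑' t, g t := by
  obtain ⟨σ, hσ⟩ := hφ
  have htelescope : HasSum (fun t => φ t - φ (t + 1)) 0 := by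
    simpa using hσ.sub ((Equiv.addRight (1 : ℤ)).hasSum_iff.mpr hσ)
  have hg : HasSum g (∑' t, f t) := by
    convert hf.hasSum.sub htelescope using 1
    · funext t
      rw [h t, add_sub_cancel_right]
    · rw [sub_zero]
  exact ⟨hg.summable, hg.tsum_eq.symm⟩

theorem summed_cost_identity_general
    (n m q : ℕ)
    (A : Matrix (Fin n) (Fin n) ℝ) (Bu : Matrix (Fin n) (Fin m) ℝ)
    (Bd : Matrix (Fin n) (Fin q) ℝ)
    (Q : Matrix (Fin n) (Fin n) ℝ)
    (S : Matrix (Fin n) (Fin m) ℝ)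
    (R : Matrix (Fin m) (Fin m) ℝ) (hR : R.IsSymm)
    (X : Matrix (Fin n) (Fin n) ℝ) (hX : X.IsSymm)
    (H : Matrix (Fin m) (Fin m) ℝ) (hH : H = R + Buᵀ * X * Bu) (hHinv : IsUnit H)
    (hDARE : 0 = X - Aᵀ * X * A - Q +
      (Aᵀ * X * Bu + S) * H⁻¹ * (Aᵀ * X * Bu + S)ᵀ)
    (Kx : Matrix (Fin m) (Fin n) ℝ) (hKx : Kx = H⁻¹ * (Aᵀ * X * Bu + S)ᵀ)
    (Kv : Matrix (Fin m) (Fin n) ℝ) (hKv : Kv = H⁻¹ * Buᵀ)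
    (Kd : Matrix (Fin m) (Fin q) ℝ) (hKd : Kd = H⁻¹ * Buᵀ * X * Bd)
    (x : ℤ → Fin n → ℝ) (u : ℤ → Fin m → ℝ) (d : ℤ → Fin q → ℝ) (v : ℤ → Fin n → ℝ)
    (hxsq : Summable fun t : ℤ => x t ⬝ᵥ x t)
    (husq : Summable fun t : ℤ => u t ⬝ᵥ u t)
    (hvsq : Summable fun t : ℤ => v t ⬝ᵥ v t)
    (hxdyn : ∀ t : ℤ, x (t + 1) = A.mulVec (x t) + Bu.mulVec (u t) + Bd.mulVec (d t))
    (hvdyn : ∀ t : ℤ, v t = ((A - Bu * Kx)ᵀ).mulVec (v (t + 1) + X.mulVec (Bd.mulVec (d t))))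
    (uo : ℤ → Fin m → ℝ)
    (huo : ∀ t : ℤ, uo t = -(Kx.mulVec (x t)) - Kv.mulVec (v (t + 1)) - Kd.mulVec (d t)) :
    Summable (fun t : ℤ =>
      x t ⬝ᵥ Q.mulVec (x t) + 2 * (x t ⬝ᵥ S.mulVec (u t)) + u t ⬝ᵥ R.mulVec (u t)) ∧
    Summable (fun t : ℤ =>
      (u t - uo t) ⬝ᵥ H.mulVec (u t - uo t)
      - (Kd.mulVec (d t) + Kv.mulVec (v (t + 1))) ⬝ᵥ
          H.mulVec (Kd.mulVec (d t) + Kv.mulVec (v (t + 1)))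
      + d t ⬝ᵥ (Bdᵀ * X * Bd).mulVec (d t)
      + 2 * (v (t + 1) ⬝ᵥ Bd.mulVec (d t))) ∧
    (∑' t : ℤ,
      (x t ⬝ᵥ Q.mulVec (x t) + 2 * (x t ⬝ᵥ S.mulVec (u t)) + u t ⬝ᵥ R.mulVec (u t))) =
    (∑' t : ℤ,
      ((u t - uo t) ⬝ᵥ H.mulVec (u t - uo t)
      - (Kd.mulVec (d t) + Kv.mulVec (v (t + 1))) ⬝ᵥ
          H.mulVec (Kd.mulVec (d t) + Kv.mulVec (v (t + 1)))
      + d t ⬝ᵥ (Bdᵀ * X * Bd).mulVec (d t)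
      + 2 * (v (t + 1) ⬝ᵥ Bd.mulVec (d t)))) := by
  have hdet : IsUnit H.det := (isUnit_iff_isUnit_det H).mp hHinv
  have hHKx : H * Kx = (Aᵀ * X * Bu + S)ᵀ := by rw [hKx, mul_nonsing_inv_cancel_left _ _ hdet]
  have hHKv : H * Kv = Buᵀ := by rw [hKv, mul_nonsing_inv_cancel_left _ _ hdet]
  have hHKd : H * Kd = Buᵀ * X * Bd := by
    rw [hKd, Matrix.mul_assoc, Matrix.mul_assoc, mul_nonsing_inv_cancel_left _ _ hdet,
      Matrix.mul_assoc]
  have hGKx : (Aᵀ * X * Bu + S) * Kx = Aᵀ * X * A + Q - X := by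
    rw [hKx, ← Matrix.mul_assoc, ← zero_add (Aᵀ * X * A + Q - X), hDARE]
    abel
  have hcost : Summable fun t =>
      x t ⬝ᵥ Q *ᵥ x t + 2 * (x t ⬝ᵥ S *ᵥ u t) + u t ⬝ᵥ R *ᵥ u t :=
    ((hxsq.dotProduct_mulVec hxsq Q).add ((hxsq.dotProduct_mulVec husq S).mul_left 2)).add
      (husq.dotProduct_mulVec husq R)
  have hstorage : Summable fun t => x t ⬝ᵥ X *ᵥ x t + 2 * (v t ⬝ᵥ x t) :=
    (hxsq.dotProduct_mulVec hxsq X).add ((hvsq.dotProduct hxsq).mul_left 2)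
  refine ⟨hcost, hcost.summable_and_tsum_eq_of_eq_add_sub_add_one hstorage fun t => ?_⟩
  have hfeedback : u t - uo t = u t + (Kx *ᵥ x t + Kv *ᵥ v (t + 1) + Kd *ᵥ d t) := by
    rw [huo t]
    abel
  rw [hfeedback, hvdyn t, hxdyn t]
  exact stage_cost_eq_completed_square_add_storage_sub hR hX hH hHKx hGKx hHKv hHKd _ _ _ _

/-- Summed completion-of-squares identity over two-sided square-summable
trajectories (the telescoping terms vanish). -/
theorem summed_cost_identity
    (n m q : ℕ)
    (A : Matrix (Fin n) (Fin n) ℝ) (Bu : Matrix (Fin n) (Fin m) ℝ)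
    (Bd : Matrix (Fin n) (Fin q) ℝ)
    (Q : Matrix (Fin n) (Fin n) ℝ) (hQ : Q.IsSymm)
    (S : Matrix (Fin n) (Fin m) ℝ)
    (R : Matrix (Fin m) (Fin m) ℝ) (hR : R.IsSymm)
    (X : Matrix (Fin n) (Fin n) ℝ) (hX : X.IsSymm)
    (H : Matrix (Fin m) (Fin m) ℝ) (hH : H = R + Buᵀ * X * Bu) (hHinv : IsUnit H)
    (hDARE : 0 = X - Aᵀ * X * A - Q +
      (Aᵀ * X * Bu + S) * H⁻¹ * (Aᵀ * X * Bu + S)ᵀ)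
    (Kx : Matrix (Fin m) (Fin n) ℝ) (hKx : Kx = H⁻¹ * (Aᵀ * X * Bu + S)ᵀ)
    (Kv : Matrix (Fin m) (Fin n) ℝ) (hKv : Kv = H⁻¹ * Buᵀ)
    (Kd : Matrix (Fin m) (Fin q) ℝ) (hKd : Kd = H⁻¹ * Buᵀ * X * Bd)
    (x : ℤ → Fin n → ℝ) (u : ℤ → Fin m → ℝ) (d : ℤ → Fin q → ℝ) (v : ℤ → Fin n → ℝ)
    (hxsq : Summable fun t : ℤ => x t ⬝ᵥ x t)
    (husq : Summable fun t : ℤ => u t ⬝ᵥ u t)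
    (hdsq : Summable fun t : ℤ => d t ⬝ᵥ d t)
    (hvsq : Summable fun t : ℤ => v t ⬝ᵥ v t)
    (hxdyn : ∀ t : ℤ, x (t + 1) = A.mulVec (x t) + Bu.mulVec (u t) + Bd.mulVec (d t))
    (hvdyn : ∀ t : ℤ, v t = ((A - Bu * Kx)ᵀ).mulVec (v (t + 1) + X.mulVec (Bd.mulVec (d t))))
    (uo : ℤ → Fin m → ℝ)
    (huo : ∀ t : ℤ, uo t = -(Kx.mulVec (x t)) - Kv.mulVec (v (t + 1)) - Kd.mulVec (d t)) :
    Summable (fun t : ℤ =>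
      x t ⬝ᵥ Q.mulVec (x t) + 2 * (x t ⬝ᵥ S.mulVec (u t)) + u t ⬝ᵥ R.mulVec (u t)) ∧
    Summable (fun t : ℤ =>
      (u t - uo t) ⬝ᵥ H.mulVec (u t - uo t)
      - (Kd.mulVec (d t) + Kv.mulVec (v (t + 1))) ⬝ᵥ
          H.mulVec (Kd.mulVec (d t) + Kv.mulVec (v (t + 1)))
      + d t ⬝ᵥ (Bdᵀ * X * Bd).mulVec (d t)
      + 2 * (v (t + 1) ⬝ᵥ Bd.mulVec (d t))) ∧
    (∑' t : ℤ,
      (x t ⬝ᵥ Q.mulVec (x t) + 2 * (x t ⬝ᵥ S.mulVec (u t)) + u t ⬝ᵥ R.mulVec (u t))) =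
    (∑' t : ℤ,
      ((u t - uo t) ⬝ᵥ H.mulVec (u t - uo t)
      - (Kd.mulVec (d t) + Kv.mulVec (v (t + 1))) ⬝ᵥ
          H.mulVec (Kd.mulVec (d t) + Kv.mulVec (v (t + 1)))
      + d t ⬝ᵥ (Bdᵀ * X * Bd).mulVec (d t)
      + 2 * (v (t + 1) ⬝ᵥ Bd.mulVec (d t)))) :=
  summed_cost_identity_general n m q A Bu Bd Q S R hR X hX H hH hHinv hDARE Kx hKx Kv hKv Kd hKd x u
    d v hxsq husq hvsq hxdyn hvdyn uo huo
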